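/- arXiv:2106.02743 — 2 statements merged into one kernel-verified Lean document; each statement's English description precedes it below -/
import Mathlib

section
/- Let Φ ∈ ℝ^{d×S} be a matrix with ΦᵀΦ positive definite. Then Ω* = (ΦᵀΦ)^{1/2} / Tr((ΦᵀΦ)^{1/2}) is the unique minimizer of Tr(Φ Ω^{-1} Φᵀ) over symmetric positive definite matrices Ω with Tr(Ω) = 1. -/
open Matrix

open scoped ComplexOrder in
/-- The positive semidefinite square root of a positive semidefinite matrix, as defined in
Mathlib (Dec 2024); removed from current Mathlib, restored here with its old definition. -/
noncomputable def Matrix.PosSemidef.sqrt {n : Type*} [Fintype n] [DecidableEq n] {𝕜 : Type*}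
    [RCLike 𝕜] {A : Matrix n n 𝕜} (hA : A.PosSemidef) : Matrix n n 𝕜 :=
  hA.1.eigenvectorUnitary.1 * diagonal ((↑) ∘ (√·) ∘ hA.1.eigenvalues) *
  (star hA.1.eigenvectorUnitary : Matrix n n 𝕜)

/-!
Complete the square. With `R = (ΦᵀΦ)^{1/2}`, `c = Tr R` and `Ω` positive definite with
`Tr Ω = 1`,
  `Tr(Φ Ω⁻¹ Φᵀ) - c² = Tr(R² Ω⁻¹) - 2c Tr R + c² Tr Ω = Tr((R - cΩ) Ω⁻¹ (R - cΩ))`,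
and since `R - cΩ` is symmetric the right side is the trace of a positive semidefinite matrix,
which vanishes only when `R = cΩ`.
-/

open scoped MatrixOrder ComplexOrder

namespace Matrix

variable {n 𝕜 : Type*} [Fintype n] [RCLike 𝕜]

lemma PosDef.conjTranspose_mul_mul_same_eq_zero_iff {m : Type*} [Fintype m] {P : Matrix n n 𝕜}
    (hP : P.PosDef) {B : Matrix n m 𝕜} : Bᴴ * P * B = 0 ↔ B = 0 := by
  refine ⟨fun h => ext_iff_mulVec.2 fun v => ?_, fun h => by simp [h]⟩
  have : star (B *ᵥ v) ⬝ᵥ P *ᵥ (B *ᵥ v) = 0 := by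
    simpa [star_mulVec, dotProduct_mulVec, vecMul_vecMul, ← mulVec_mulVec, ← Matrix.mul_assoc]
      using congrArg (fun M => star v ⬝ᵥ M *ᵥ v) h
  rw [zero_mulVec]
  by_contra hBv
  exact (hP.dotProduct_mulVec_pos hBv).ne' this

lemma PosDef.trace_conjTranspose_mul_mul_same_eq_zero_iff {m : Type*} [Fintype m]
    {P : Matrix n n 𝕜} (hP : P.PosDef) {B : Matrix n m 𝕜} :
    (Bᴴ * P * B).trace = 0 ↔ B = 0 := by
  rw [(hP.posSemidef.conjTranspose_mul_mul_same B).trace_eq_zero_iff,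
    hP.conjTranspose_mul_mul_same_eq_zero_iff]

variable [DecidableEq n]

lemma PosSemidef.sqrt_eq_cfcSqrt {A : Matrix n n 𝕜} (hA : A.PosSemidef) :
    hA.sqrt = CFC.sqrt A := by
  rw [CFC.sqrt_eq_cfc, cfc_nnreal_eq_real _ A hA.nonneg, hA.1.cfc_eq, IsHermitian.cfc,
    Unitary.conjStarAlgAut_apply]
  -- `√x` is by definition `NNReal.sqrt x.toNNReal`, the function the CFC square root applies
  simp only [PosSemidef.sqrt, Real.sqrt]

lemma PosSemidef.sqrt_mul_self {A : Matrix n n 𝕜} (hA : A.PosSemidef) :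
    hA.sqrt * hA.sqrt = A := by
  rw [hA.sqrt_eq_cfcSqrt, CFC.sqrt_mul_sqrt_self A hA.nonneg]

lemma PosDef.posDef_sqrt {A : Matrix n n 𝕜} (hA : A.PosDef) : hA.posSemidef.sqrt.PosDef := by
  rw [hA.posSemidef.sqrt_eq_cfcSqrt, ← isStrictlyPositive_iff_posDef]
  exact hA.isStrictlyPositive.sqrt

lemma trace_mul_self_mul_inv_sub_sq_trace {K : Type*} [CommRing K] {R Ω : Matrix n n K}
    (hΩ : IsUnit Ω.det) (hΩ1 : Ω.trace = 1) :
    (R * R * Ω⁻¹).trace - R.trace ^ 2 =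
      ((R - R.trace • Ω) * Ω⁻¹ * (R - R.trace • Ω)).trace := by
  have hcross : (R * (Ω⁻¹ * R)).trace = (R * R * Ω⁻¹).trace := by
    rw [trace_mul_comm, Matrix.mul_assoc, trace_mul_comm]
  simp only [sub_mul, mul_sub, Matrix.smul_mul, Matrix.mul_smul, Matrix.mul_assoc,
    nonsing_inv_mul _ hΩ, mul_nonsing_inv_cancel_left _ _ hΩ, Matrix.mul_one, trace_sub,
    trace_smul, smul_eq_mul, hΩ1, hcross]
  ring

lemma sq_trace_le_trace_mul_self_mul_inv {R Ω : Matrix n n ℝ} (hR : R.IsHermitian)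
    (hΩ : Ω.PosDef) (hΩ1 : Ω.trace = 1) : R.trace ^ 2 ≤ (R * R * Ω⁻¹).trace := by
  have hM : (R - R.trace • Ω)ᴴ = R - R.trace • Ω := hR.sub (hΩ.1.smul (.all _))
  have key := (hΩ.inv.posSemidef.conjTranspose_mul_mul_same (R - R.trace • Ω)).trace_nonneg
  rw [hM, ← trace_mul_self_mul_inv_sub_sq_trace ((isUnit_iff_isUnit_det _).1 hΩ.isUnit) hΩ1]
    at key
  linarith

lemma trace_mul_self_mul_inv_eq_sq_trace_iff {R Ω : Matrix n n ℝ} (hR : R.IsHermitian)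
    (hΩ : Ω.PosDef) (hΩ1 : Ω.trace = 1) :
    (R * R * Ω⁻¹).trace = R.trace ^ 2 ↔ R = R.trace • Ω := by
  have hM : (R - R.trace • Ω)ᴴ = R - R.trace • Ω := hR.sub (hΩ.1.smul (.all _))
  have key := hΩ.inv.trace_conjTranspose_mul_mul_same_eq_zero_iff (B := R - R.trace • Ω)
  rwa [hM, ← trace_mul_self_mul_inv_sub_sq_trace ((isUnit_iff_isUnit_det _).1 hΩ.isUnit) hΩ1,
    sub_eq_zero, sub_eq_zero] at key

end Matrix

/-- For `Φ ∈ ℝ^{d×S}` with `ΦᵀΦ` positive definite,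
`Ω* = (ΦᵀΦ)^{1/2} / Tr((ΦᵀΦ)^{1/2})` is the unique minimizer of `Tr(Φ Ω⁻¹ Φᵀ)` over
symmetric positive definite matrices `Ω` with `Tr(Ω) = 1`. -/
theorem omega_update_unique_minimizer
    (d S : ℕ) (Φ : Matrix (Fin d) (Fin S) ℝ)
    (h : (Φᵀ * Φ).PosDef) :
    ∀ Ω : Matrix (Fin S) (Fin S) ℝ, Ω.PosDef → Ω.trace = 1 →
      (Φ * ((h.posSemidef.sqrt.trace)⁻¹ • h.posSemidef.sqrt)⁻¹ * Φᵀ).trace ≤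
          (Φ * Ω⁻¹ * Φᵀ).trace ∧
        ((Φ * Ω⁻¹ * Φᵀ).trace =
            (Φ * ((h.posSemidef.sqrt.trace)⁻¹ • h.posSemidef.sqrt)⁻¹ * Φᵀ).trace →
          Ω = (h.posSemidef.sqrt.trace)⁻¹ • h.posSemidef.sqrt) := by
  intro Ω hΩ hΩ1
  set R := h.posSemidef.sqrt
  have hR : R.PosDef := h.posDef_sqrt
  have objective (X : Matrix (Fin S) (Fin S) ℝ) : (Φ * X * Φᵀ).trace = (R * R * X).trace := by
    rw [trace_mul_cycle, h.posSemidef.sqrt_mul_self]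
  have : Nonempty (Fin S) := not_isEmpty_iff.1 fun _ => by
    simp [trace_eq_zero_of_isEmpty] at hΩ1
  have hc : 0 < R.trace := hR.trace_pos
  have hmin : (R * R * (R.trace⁻¹ • R)⁻¹).trace = R.trace ^ 2 := by
    refine (trace_mul_self_mul_inv_eq_sq_trace_iff hR.1 (hR.smul (inv_pos.2 hc)) ?_).2 ?_
    · rw [trace_smul, smul_eq_mul, inv_mul_cancel₀ hc.ne']
    · rw [smul_inv_smul₀ hc.ne']
  rw [objective, objective, hmin, eq_inv_smul_iff₀ hc.ne']
  exact ⟨sq_trace_le_trace_mul_self_mul_inv hR.1 hΩ hΩ1,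
    fun heq => ((trace_mul_self_mul_inv_eq_sq_trace_iff hR.1 hΩ hΩ1).1 heq).symm⟩
end

section
/- Let 0 ≤ ζ < 1 and τ ≥ 1. Then for any sequence of nonnegative reals a₁,…,a_T, Σ_{t=1}^T Σ_{s=1}^t ζ^{2⌊(t−s)/τ⌋} a_s ≤ ((1+ζ²)/(1−ζ²)) · τ · Σ_{s=1}^T a_s. -/
open Finset

/-- Sum of `r^(d/τ)` over `d < τ*K` equals `τ` times the geometric sum. -/
lemma block_geom_sum (r : ℝ) (τ : ℕ) (K : ℕ) :
    ∑ d ∈ range (τ * K), r ^ (d / τ) = τ * ∑ k ∈ range K, r ^ k := by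
  induction K with
  | zero => simp
  | succ K ih =>
    rw [Nat.mul_succ, Finset.sum_range_add, ih, Finset.sum_range_succ]
    have hc : ∀ x ∈ range τ, r ^ ((τ * K + x) / τ) = r ^ K := by
      intro x hx
      have hx' : x < τ := Finset.mem_range.mp hx
      have hτ0 : 0 < τ := lt_of_le_of_lt (Nat.zero_le x) hx'
      congr 1
      rw [Nat.add_comm, Nat.mul_comm, Nat.add_mul_div_right _ _ hτ0,
        Nat.div_eq_of_lt hx', Nat.zero_add]
    rw [Finset.sum_congr rfl hc, Finset.sum_const, nsmul_eq_mul, Finset.card_range]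
    ring

/-- Geometric-sum bound producing the `((1+ζ²)/(1−ζ²))τ` factor of the DPA-SGD
residual term: for `0 ≤ ζ < 1`, `τ ≥ 1`, and nonnegative reals `a₁, …, a_T`,
`∑_{t=1}^T ∑_{s=1}^t ζ^{2⌊(t−s)/τ⌋} a_s ≤ ((1+ζ²)/(1−ζ²)) · τ · ∑_{s=1}^T a_s`. -/
theorem geometric_block_sum_bound
    (ζ : ℝ) (hζ0 : 0 ≤ ζ) (hζ1 : ζ < 1) (τ : ℕ) (hτ : 1 ≤ τ)
    (T : ℕ) (a : ℕ → ℝ) (ha : ∀ t, 0 ≤ a t) :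
    ∑ t ∈ Finset.Icc 1 T, ∑ s ∈ Finset.Icc 1 t, ζ ^ (2 * ((t - s) / τ)) * a s ≤
      ((1 + ζ ^ 2) / (1 - ζ ^ 2)) * τ * ∑ s ∈ Finset.Icc 1 T, a s := by
  set r := ζ ^ 2 with hr
  have hr0 : 0 ≤ r := sq_nonneg ζ
  have hr1 : r < 1 := by nlinarith
  have hr1' : 0 < 1 - r := by linarith
  have hpow : ∀ t s : ℕ, ζ ^ (2 * ((t - s) / τ)) = r ^ ((t - s) / τ) := by
    intro t s; rw [hr, ← pow_mul]
  -- swap sums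
  have hswap : ∑ t ∈ Finset.Icc 1 T, ∑ s ∈ Finset.Icc 1 t, r ^ ((t - s) / τ) * a s
      = ∑ s ∈ Finset.Icc 1 T, (∑ t ∈ Finset.Icc s T, r ^ ((t - s) / τ)) * a s := by
    have h1 : ∀ n, Finset.Icc 1 n = Finset.Ico 1 (n + 1) := by
      intro n; rw [Finset.Ico_add_one_right_eq_Icc]
    simp_rw [h1, Finset.sum_mul]
    rw [← Finset.sum_Ico_Ico_comm 1 (T + 1) (fun s t => r ^ ((t - s) / τ) * a s)]
    refine Finset.sum_congr rfl fun s hs => ?_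
    rw [Finset.Ico_add_one_right_eq_Icc]
  -- bound inner sum
  have hinner : ∀ s, ∑ t ∈ Finset.Icc s T, r ^ ((t - s) / τ) ≤ τ / (1 - r) := by
    intro s
    have h2 : ∑ t ∈ Finset.Icc s T, r ^ ((t - s) / τ)
        = ∑ d ∈ range (T + 1 - s), r ^ (d / τ) := by
      rw [← Finset.Ico_add_one_right_eq_Icc, Finset.sum_Ico_eq_sum_range]
      exact Finset.sum_congr rfl fun d _ => by rw [Nat.add_sub_cancel_left]
    rw [h2]
    set M := T + 1 - s
    have hgeom : ∑ k ∈ range M, r ^ k ≤ (1 - r)⁻¹ := by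
      have h3 := Summable.sum_le_tsum (range M) (fun i _ => pow_nonneg hr0 i)
        (summable_geometric_of_lt_one hr0 hr1)
      rwa [tsum_geometric_of_lt_one hr0 hr1] at h3
    calc ∑ d ∈ range M, r ^ (d / τ)
        ≤ ∑ d ∈ range (τ * M), r ^ (d / τ) := by
          apply Finset.sum_le_sum_of_subset_of_nonneg
          · exact Finset.range_subset_range.mpr (Nat.le_mul_of_pos_left M hτ)
          · intro i _ _; positivity
      _ = τ * ∑ k ∈ range M, r ^ k := block_geom_sum r τ M
      _ ≤ τ * (1 - r)⁻¹ := mul_le_mul_of_nonneg_left hgeom (Nat.cast_nonneg τ)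
      _ = τ / (1 - r) := by rw [div_eq_mul_inv]
  simp_rw [hpow]
  rw [hswap]
  have hstep : ∑ s ∈ Finset.Icc 1 T, (∑ t ∈ Finset.Icc s T, r ^ ((t - s) / τ)) * a s
      ≤ ∑ s ∈ Finset.Icc 1 T, (τ / (1 - r)) * a s :=
    Finset.sum_le_sum fun s _ => mul_le_mul_of_nonneg_right (hinner s) (ha s)
  refine hstep.trans ?_
  rw [← Finset.mul_sum]
  apply mul_le_mul_of_nonneg_right _ (Finset.sum_nonneg fun s _ => ha s)
  rw [div_le_iff₀ hr1']
  have heq : ((1 + r) / (1 - r)) * τ * (1 - r) = (1 + r) * τ := by field_simp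
  rw [heq]
  nlinarith [Nat.cast_nonneg (α := ℝ) τ, (by exact_mod_cast hτ : (1:ℝ) ≤ τ)]
end
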